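/- Fix d ≥ 2. There exist constants c₃ and c₄ depending only on d such that for every rational map φ: ℙ¹ → ℙ¹ of degree d defined over K and every P ∈ ℙ¹(K), one has |ĥ_φ(P) − h(P)| ≤ c₃·h(φ) + c₄. -/

import Mathlib

/-!
At each place `v`, write `φ = f/g` and `P = [x : 1]`. The ultrametric inequality gives
`max(|f(x)|_v, |g(x)|_v) ≤ |φ|_v · max(|x|_v, 1)^d`. Conversely, multiplying the row vector
`(x^i)_{i < 2d}` by the Sylvester matrix of `f, g` and then by its adjugate expresses
`Res(f, g) · x^k` through the values `x^j f(x)`, `x^j g(x)`, whence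
`|Res(f, g)|_v · max(|x|_v, 1)^d ≤ |φ|_v^{2d} · max(|f(x)|_v, |g(x)|_v)`.
Since `f, g` are coprime, `Res(f, g) ≠ 0`, so summing over the places with the product formula
yields `|h(φ(P)) - d h(P)| ≤ 2d h(φ)`. Tate's telescoping argument then gives
`|ĥ_φ(P) - h(P)| ≤ 2d h(φ) / (d - 1) ≤ 4 h(φ)`.
-/

open Polynomial Filter

noncomputable section

attribute [local instance] Classical.propDecidable

/-- A set of nonarchimedean places on a field `K`, satisfying the product formula;
this is the structure carried by the function field of a smooth projective curve
over an algebraically closed field of characteristic `0`. -/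
structure PlaceData (K : Type*) [Field K] where
  Place : Type
  absv : Place → AbsoluteValue K ℝ
  nonarch : ∀ (v : Place) (x y : K), absv v (x + y) ≤ max (absv v x) (absv v y)
  finite_support : ∀ x : K, x ≠ 0 → {v : Place | absv v x ≠ 1}.Finite
  product_formula : ∀ x : K, x ≠ 0 → (∑ᶠ v : Place, Real.log (absv v x)) = 0

variable {K : Type*} [Field K]

/-- The (absolute logarithmic) height of an element of `K`. -/
def PlaceData.ht (M : PlaceData K) (x : K) : ℝ :=
  ∑ᶠ v : M.Place, Real.log (max (M.absv v x) 1)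

/-- Points of `ℙ¹(K) = K ∪ {∞}` are modelled by `Option K`: `some x = [x:1]`, `none = ∞`. -/
def PlaceData.htP1 (M : PlaceData K) : Option K → ℝ
  | Option.some x => M.ht x
  | Option.none => 0

/-- `max` of `av` over the coefficients of a polynomial. -/
def polyAbs (av : AbsoluteValue K ℝ) (p : K[X]) : ℝ :=
  (Finset.range (p.natDegree + 1)).sup' ⟨0, Finset.mem_range.mpr (Nat.succ_pos _)⟩ fun i => av (p.coeff i)

/-- The height of a rational function `φ = f/g` with `f, g` coprime. -/
def PlaceData.htRF (M : PlaceData K) (φ : RatFunc K) : ℝ :=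
  ∑ᶠ v : M.Place, Real.log (max (polyAbs (M.absv v) φ.num) (polyAbs (M.absv v) φ.denom))

/-- The degree of a rational function. -/
def degRF (φ : RatFunc K) : ℕ := max φ.num.natDegree φ.denom.natDegree

/-- Evaluation of a rational map `φ` on `ℙ¹(K) = K ∪ {∞}`. -/
def evalP1 (φ : RatFunc K) : Option K → Option K
  | Option.some a =>
      if φ.denom.eval a = 0 then Option.none
      else Option.some (φ.num.eval a / φ.denom.eval a)
  | Option.none =>
      if φ.denom.natDegree < φ.num.natDegree then Option.none
      else Option.some (φ.num.coeff φ.denom.natDegree / φ.denom.leadingCoeff)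

/-- Composition of rational functions. -/
def RFcomp (φ ψ : RatFunc K) : RatFunc K :=
  φ.num.eval₂ (algebraMap K (RatFunc K)) ψ / φ.denom.eval₂ (algebraMap K (RatFunc K)) ψ

/-- The `n`-fold iterate `φⁿ = φ ∘ ⋯ ∘ φ` as a rational function. -/
def RFiter (φ : RatFunc K) : ℕ → RatFunc K
  | 0 => RatFunc.X
  | n + 1 => RFcomp φ (RFiter φ n)

/-- The canonical height `ĥ_φ(P) = lim_n h(φⁿ(P))/dⁿ`. -/
def canHt (M : PlaceData K) (φ : RatFunc K) (P : Option K) : ℝ :=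
  limUnder atTop fun n : ℕ => M.htP1 ((evalP1 φ)^[n] P) / (degRF φ : ℝ) ^ n

/-- `P ∈ ℙ¹(K)` is preperiodic for `φ` if its forward orbit is finite. -/
def P1Preperiodic (φ : RatFunc K) (P : Option K) : Prop :=
  (Set.range fun n : ℕ => (evalP1 φ)^[n] P).Finite

/-- Base change of a rational function along a field embedding. -/
def mapRF {L : Type*} [Field L] (f : K →+* L) (φ : RatFunc K) : RatFunc L :=
  algebraMap L[X] (RatFunc L) (φ.num.map f) / algebraMap L[X] (RatFunc L) (φ.denom.map f)

/-- Base change of a point of `ℙ¹`. -/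
def mapP1 {L : Type*} [Field L] (f : K →+* L) : Option K → Option L :=
  Option.map fun x => f x

/-- `φ ∈ K(z)` is isotrivial if some Möbius conjugate `M⁻¹ ∘ φ ∘ M`, with
`M ∈ PGL₂(K̄)`, has all coefficients in the field of constants `k`. -/
def IsIsotrivial (k : Type*) [Field k] [Algebra k K] (φ : RatFunc K) : Prop :=
  ∃ a b c d : AlgebraicClosure K, a * d - b * c ≠ 0 ∧
    ∃ ψ : RatFunc (AlgebraicClosure K),
      ψ = RFcomp
            ((RatFunc.C d * RatFunc.X - RatFunc.C b) /
              (-(RatFunc.C c) * RatFunc.X + RatFunc.C a))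
            (RFcomp (mapRF (algebraMap K (AlgebraicClosure K)) φ)
              ((RatFunc.C a * RatFunc.X + RatFunc.C b) /
                (RatFunc.C c * RatFunc.X + RatFunc.C d))) ∧
      (∀ i, ψ.num.coeff i ∈
        Set.range ((algebraMap K (AlgebraicClosure K)).comp (algebraMap k K))) ∧
      (∀ i, ψ.denom.coeff i ∈
        Set.range ((algebraMap K (AlgebraicClosure K)).comp (algebraMap k K)))

/-- `Q ∈ ℙ¹(K)` is exceptional for `φ` if its total backward orbit in `ℙ¹(K̄)` is finite. -/
def IsExceptional (φ : RatFunc K) (Q : Option K) : Prop :=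
  {P : Option (AlgebraicClosure K) | ∃ m : ℕ, 1 ≤ m ∧
    (evalP1 (mapRF (algebraMap K (AlgebraicClosure K)) φ))^[m] P
      = mapP1 (algebraMap K (AlgebraicClosure K)) Q}.Finite

/-- The chordal metric `ρ_v` on `ℙ¹`, relative to an absolute value. -/
def chordalDist (av : AbsoluteValue K ℝ) : Option K → Option K → ℝ
  | Option.some x, Option.some y => av (x - y) / (max (av x) 1 * max (av y) 1)
  | Option.some x, Option.none => 1 / max (av x) 1
  | Option.none, Option.some y => 1 / max (av y) 1
  | Option.none, Option.none => 0

/-- The logarithmic chordal metric `λ_v = - log ρ_v`. -/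
def lamv (av : AbsoluteValue K ℝ) (P Q : Option K) : ℝ := - Real.log (chordalDist av P Q)

/-- The ring of `S`-integers `R_S = {x ∈ K : |x|_v ≤ 1 for all v ∉ S}`. -/
def SInt (M : PlaceData K) (S : Finset M.Place) : Set K :=
  {x : K | ∀ v : M.Place, v ∉ S → M.absv v x ≤ 1}

/-- The group of `S`-units `R_S^* = {x ∈ K : x ≠ 0, |x|_v = 1 for all v ∉ S}`. -/
def SUnit (M : PlaceData K) (S : Finset M.Place) : Set K :=
  {x : K | x ≠ 0 ∧ ∀ v : M.Place, v ∉ S → M.absv v x = 1}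

/-- Ramification index of `f` at a finite point `a` with `f(a)` finite,
`e_a(f) = ord_a (f(z) - f(a))`; if `f(a) = ∞` it is the order of the pole. -/
def ramIndexFin (f : RatFunc K) (a : K) : ℕ :=
  if f.denom.eval a = 0 then f.denom.rootMultiplicity a
  else ((f - RatFunc.C (f.num.eval a / f.denom.eval a)).num).rootMultiplicity a

/-- Ramification index `e_P(f)` of `f` at `P ∈ ℙ¹(K)`; the point `∞` is handled by
conjugating with the Möbius transformation `z ↦ 1/z`. -/
def ramIndex (f : RatFunc K) : Option K → ℕ
  | Option.some a => ramIndexFin f a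
  | Option.none => ramIndexFin (RFcomp f (1 / RatFunc.X)) 0

/-- `log_d⁺ t = max (log t / log d) 0`. -/
def logdPlus (d : ℕ) (t : ℝ) : ℝ := max (Real.log t / Real.log d) 0

/-- `inf {ĥ_φ(Q) : Q ∈ ℙ¹(K), ĥ_φ(Q) > 0}`. -/
def infposCanHt (M : PlaceData K) (φ : RatFunc K) : ℝ :=
  sInf {t : ℝ | 0 < t ∧ ∃ Q : Option K, canHt M φ Q = t}

/-- `K` is an (algebraic) function field in one variable over `k`. -/
def IsFunctionFieldOver (k K : Type*) [Field k] [Field K] [Algebra k K] : Prop :=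
  ∃ t : K, Transcendental k t ∧
    FiniteDimensional (IntermediateField.adjoin k ({t} : Set K)) K


open Function (HasFiniteSupport)

namespace IsNonarchimedean

variable {av : AbsoluteValue K ℝ}

lemma abv_sum_le_of_forall_le (hv : IsNonarchimedean av) {ι : Type*} (s : Finset ι) (f : ι → K)
    {C : ℝ} (hC : 0 ≤ C) (h : ∀ i ∈ s, av (f i) ≤ C) : av (∑ i ∈ s, f i) ≤ C := by
  rcases s.eq_empty_or_nonempty with rfl | hs
  · simpa using hC
  · exact (hv.apply_sum_le_sup hs).trans (Finset.sup'_le _ _ h)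

lemma abv_det_le {n : Type*} [Fintype n] [DecidableEq n] (hv : IsNonarchimedean av)
    (A : Matrix n n K) {C : ℝ} (hC : 0 ≤ C) (h : ∀ i j, av (A i j) ≤ C) :
    av A.det ≤ C ^ Fintype.card n := by
  rw [Matrix.det_apply]
  refine hv.abv_sum_le_of_forall_le _ _ (by positivity) fun σ _ => ?_
  rw [av.map_units_int_smul, map_prod]
  calc ∏ i, av (A (σ i) i) ≤ ∏ _i : n, C := by gcongr with i; exact h _ _
    _ = C ^ Fintype.card n := by simp

lemma abv_eval_le (hv : IsNonarchimedean av) {p : K[X]} {n : ℕ} (hp : p.natDegree ≤ n)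
    {B : ℝ} (hB : ∀ i, av (p.coeff i) ≤ B) (x : K) :
    av (p.eval x) ≤ B * max (av x) 1 ^ n := by
  have hB0 : 0 ≤ B := (av.nonneg _).trans (hB 0)
  rw [eval_eq_sum_range]
  refine hv.abv_sum_le_of_forall_le _ _ (by positivity) fun i hi => ?_
  rw [map_mul, map_pow]
  gcongr
  · exact hB i
  · calc av x ^ i ≤ max (av x) 1 ^ i := by gcongr; exact le_max_left _ _
      _ ≤ max (av x) 1 ^ n :=
        pow_le_pow_right₀ (le_max_right _ _) (by rw [Finset.mem_range] at hi; omega)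

end IsNonarchimedean

lemma le_polyAbs (av : AbsoluteValue K ℝ) (p : K[X]) (i : ℕ) : av (p.coeff i) ≤ polyAbs av p := by
  rcases le_or_gt i p.natDegree with h | h
  · exact Finset.le_sup' (fun i => av (p.coeff i)) (Finset.mem_range.mpr (Nat.lt_succ_of_le h))
  · rw [coeff_eq_zero_of_natDegree_lt h, map_zero]
    exact (av.nonneg _).trans
      (Finset.le_sup' (fun i => av (p.coeff i)) (Finset.mem_range.mpr p.natDegree.succ_pos))

namespace Polynomial

variable {R : Type*} [CommRing R] {f g : R[X]} {m n : ℕ}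

lemma sum_pow_mul_sylvester_castAdd (hg : g.natDegree ≤ n) (x : R) (j : Fin m) :
    ∑ i : Fin (m + n), x ^ (i : ℕ) * sylvester f g m n i (Fin.castAdd n j) =
      x ^ (j : ℕ) * g.eval x := by
  have hdeg : (X ^ (j : ℕ) * g).natDegree < m + n :=
    natDegree_mul_le.trans_lt (by have := natDegree_X_pow_le (R := R) (j : ℕ); omega)
  rw [← eval_X_pow (R := R) (n := (j : ℕ)) (x := x), ← eval_mul, eval_eq_sum_range' hdeg,
    ← Fin.sum_univ_eq_sum_range]
  refine Finset.sum_congr rfl fun i _ => ?_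
  simp only [sylvester, Matrix.of_apply, Fin.addCases_left, coeff_X_pow_mul', Set.mem_Icc]
  rw [mul_comm]
  by_cases hji : (j : ℕ) ≤ i
  · by_cases hin : (i : ℕ) ≤ j + n
    · simp [hji, hin]
    · simp [hji, hin, coeff_eq_zero_of_natDegree_lt (show g.natDegree < i - j by omega)]
  · simp [hji]

lemma sum_pow_mul_sylvester_natAdd (hf : f.natDegree ≤ m) (x : R) (j : Fin n) :
    ∑ i : Fin (m + n), x ^ (i : ℕ) * sylvester f g m n i (Fin.natAdd m j) =
      x ^ (j : ℕ) * f.eval x := by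
  have hdeg : (X ^ (j : ℕ) * f).natDegree < m + n :=
    natDegree_mul_le.trans_lt (by have := natDegree_X_pow_le (R := R) (j : ℕ); omega)
  rw [← eval_X_pow (R := R) (n := (j : ℕ)) (x := x), ← eval_mul, eval_eq_sum_range' hdeg,
    ← Fin.sum_univ_eq_sum_range]
  refine Finset.sum_congr rfl fun i _ => ?_
  simp only [sylvester, Matrix.of_apply, Fin.addCases_right, coeff_X_pow_mul', Set.mem_Icc]
  rw [mul_comm]
  by_cases hji : (j : ℕ) ≤ i
  · by_cases hin : (i : ℕ) ≤ j + m
    · simp [hji, hin]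
    · simp [hji, hin, coeff_eq_zero_of_natDegree_lt (show f.natDegree < i - j by omega)]
  · simp [hji]

lemma resultant_mul_pow_eq_sum (hf : f.natDegree ≤ m) (hg : g.natDegree ≤ n) (x : R)
    (k : Fin (m + n)) :
    resultant f g m n * x ^ (k : ℕ) =
      ∑ j, Fin.addCases (fun j : Fin m => x ^ (j : ℕ) * g.eval x)
        (fun j : Fin n => x ^ (j : ℕ) * f.eval x) j * (sylvester f g m n).adjugate j k := by
  set w : Fin (m + n) → R := fun i => x ^ (i : ℕ)
  have hrow : Matrix.vecMul w (sylvester f g m n) =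
      Fin.addCases (fun j : Fin m => x ^ (j : ℕ) * g.eval x)
        (fun j : Fin n => x ^ (j : ℕ) * f.eval x) := by
    funext j
    induction j using Fin.addCases with
    | left j => simpa [Matrix.vecMul, dotProduct] using sum_pow_mul_sylvester_castAdd hg x j
    | right j => simpa [Matrix.vecMul, dotProduct] using sum_pow_mul_sylvester_natAdd hf x j
  have := congrFun (congrArg (Matrix.vecMul w) (Matrix.mul_adjugate (sylvester f g m n))) k
  simp only [← Matrix.vecMul_vecMul, hrow, Matrix.vecMul_smul, Matrix.vecMul_one] at this
  simpa [resultant, w, Matrix.vecMul, dotProduct] using this.symm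

lemma abv_sylvester_le {av : AbsoluteValue R ℝ} {Φ : ℝ} (hΦ : 0 ≤ Φ)
    (hfΦ : ∀ i, av (f.coeff i) ≤ Φ) (hgΦ : ∀ i, av (g.coeff i) ≤ Φ) (i j : Fin (m + n)) :
    av (sylvester f g m n i j) ≤ Φ := by
  induction j using Fin.addCases <;>
    simp only [sylvester, Matrix.of_apply, Fin.addCases_left, Fin.addCases_right] <;>
    split_ifs <;> simp [hfΦ, hgΦ, hΦ]

end Polynomial

lemma Polynomial.resultant_ne_zero_of_natDegree_le {f g : K[X]} (H : IsCoprime f g) {d : ℕ}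
    (hf : f.natDegree ≤ d) (hg : g.natDegree ≤ d) (htop : f.natDegree = d ∨ g.natDegree = d) :
    resultant f g d d ≠ 0 := by
  rcases htop with hfd | hgd
  · obtain ⟨k, hk⟩ := Nat.exists_eq_add_of_le hg
    rw [show resultant f g d d = resultant f g f.natDegree (g.natDegree + k) by rw [← hk, hfd],
      resultant_add_right_deg _ _ _ _ _ le_rfl]
    refine mul_ne_zero ?_ (resultant_ne_zero f g H)
    rcases eq_or_ne f 0 with rfl | hf0
    · obtain rfl : k = 0 := by rw [natDegree_zero] at hfd; omega
      simp
    · exact pow_ne_zero _ (leadingCoeff_ne_zero.mpr hf0)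
  · obtain ⟨k, hk⟩ := Nat.exists_eq_add_of_le hf
    rw [show resultant f g d d = resultant f g (f.natDegree + k) g.natDegree by rw [← hk, hgd],
      resultant_add_left_deg _ _ _ _ _ le_rfl]
    refine mul_ne_zero (mul_ne_zero (by simp) ?_) (resultant_ne_zero f g H)
    rcases eq_or_ne g 0 with rfl | hg0
    · obtain rfl : k = 0 := by rw [natDegree_zero] at hgd; omega
      simp
    · exact pow_ne_zero _ (leadingCoeff_ne_zero.mpr hg0)

namespace IsNonarchimedean

variable {av : AbsoluteValue K ℝ}

lemma abv_adjugate_sylvester_le (hv : IsNonarchimedean av) {f g : K[X]} {m n : ℕ} {Φ : ℝ}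
    (hΦ : 1 ≤ Φ) (hfΦ : ∀ i, av (f.coeff i) ≤ Φ) (hgΦ : ∀ i, av (g.coeff i) ≤ Φ)
    (i j : Fin (m + n)) :
    av ((sylvester f g m n).adjugate i j) ≤ Φ ^ (m + n) := by
  rw [Matrix.adjugate_apply]
  convert hv.abv_det_le _ (zero_le_one.trans hΦ) fun k l => ?_ using 2
  · simp
  rw [Matrix.updateRow_apply]
  split_ifs
  · rw [Pi.single_apply]; split_ifs <;> simp [hΦ, zero_le_one.trans hΦ]
  · exact abv_sylvester_le (zero_le_one.trans hΦ) hfΦ hgΦ _ _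

lemma abv_resultant_mul_le (hv : IsNonarchimedean av) {f g : K[X]} {d : ℕ} (hd : 1 ≤ d)
    (hf : f.natDegree ≤ d) (hg : g.natDegree ≤ d) {Φ : ℝ} (hΦ : 1 ≤ Φ)
    (hfΦ : ∀ i, av (f.coeff i) ≤ Φ) (hgΦ : ∀ i, av (g.coeff i) ≤ Φ) (x : K) :
    av (resultant f g d d) * max (av x) 1 ^ d ≤
      Φ ^ (d + d) * max (av (f.eval x)) (av (g.eval x)) := by
  set μ := max (av x) 1
  set E := max (av (f.eval x)) (av (g.eval x))
  have hμ : 1 ≤ μ := le_max_right _ _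
  have hrow : ∀ j : Fin (d + d), av (Fin.addCases (fun j : Fin d => x ^ (j : ℕ) * g.eval x)
      (fun j : Fin d => x ^ (j : ℕ) * f.eval x) j) ≤ μ ^ (d - 1) * E := by
    have hpow : ∀ j : Fin d, av (x ^ (j : ℕ)) ≤ μ ^ (d - 1) := fun j => by
      rw [map_pow]
      exact (pow_le_pow_left₀ (av.nonneg x) (le_max_left _ _) _).trans
        (pow_le_pow_right₀ hμ (by omega))
    intro j
    induction j using Fin.addCases with
    | left j =>
      rw [Fin.addCases_left, map_mul]
      exact mul_le_mul (hpow j) (le_max_right _ _) (av.nonneg _) (by positivity)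
    | right j =>
      rw [Fin.addCases_right, map_mul]
      exact mul_le_mul (hpow j) (le_max_left _ _) (av.nonneg _) (by positivity)
  have hk : ∀ k : Fin (d + d), av (resultant f g d d) * av x ^ (k : ℕ) ≤
      Φ ^ (d + d) * (μ ^ (d - 1) * E) := fun k => by
    rw [← map_pow, ← map_mul, resultant_mul_pow_eq_sum hf hg]
    refine hv.abv_sum_le_of_forall_le _ _ (by positivity) fun j _ => ?_
    rw [map_mul, mul_comm]
    exact mul_le_mul (hv.abv_adjugate_sylvester_le hΦ hfΦ hgΦ j k) (hrow j) (av.nonneg _)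
      (by positivity)
  have htop : av (resultant f g d d) * μ ^ (d + d - 1) ≤ Φ ^ (d + d) * (μ ^ (d - 1) * E) := by
    rcases le_total (av x) 1 with hx | hx
    · simpa [μ, max_eq_right hx] using hk ⟨0, by omega⟩
    · simpa [μ, max_eq_left hx] using hk ⟨d + d - 1, by omega⟩
  rw [show d + d - 1 = d + (d - 1) by omega, pow_add] at htop
  have : 0 < μ ^ (d - 1) := by positivity
  nlinarith

end IsNonarchimedean

/-- The `|φ|_v` of the paper, so that `h(φ) = ∑_v log |φ|_v`. -/
def ratFuncAbs (av : AbsoluteValue K ℝ) (φ : RatFunc K) : ℝ :=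
  max (polyAbs av φ.num) (polyAbs av φ.denom)

lemma one_le_ratFuncAbs (av : AbsoluteValue K ℝ) (φ : RatFunc K) : 1 ≤ ratFuncAbs av φ := by
  calc 1 = av φ.denom.leadingCoeff := by rw [φ.monic_denom.leadingCoeff, map_one]
    _ ≤ ratFuncAbs av φ := (le_polyAbs av _ _).trans (le_max_right _ _)

lemma abv_coeff_num_le_ratFuncAbs (av : AbsoluteValue K ℝ) (φ : RatFunc K) (i : ℕ) :
    av (φ.num.coeff i) ≤ ratFuncAbs av φ :=
  (le_polyAbs av _ i).trans (le_max_left _ _)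

lemma abv_coeff_denom_le_ratFuncAbs (av : AbsoluteValue K ℝ) (φ : RatFunc K) (i : ℕ) :
    av (φ.denom.coeff i) ≤ ratFuncAbs av φ :=
  (le_polyAbs av _ i).trans (le_max_right _ _)

lemma natDegree_num_le_degRF (φ : RatFunc K) : φ.num.natDegree ≤ degRF φ := le_max_left _ _

lemma natDegree_denom_le_degRF (φ : RatFunc K) : φ.denom.natDegree ≤ degRF φ := le_max_right _ _

namespace RatFunc

lemma eval_num_ne_zero_of_eval_denom_eq_zero (φ : RatFunc K) {x : K}
    (hx : φ.denom.eval x = 0) : φ.num.eval x ≠ 0 := by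
  obtain ⟨u, w, huw⟩ := φ.isCoprime_num_denom
  intro hn
  simpa [hn, hx] using congrArg (Polynomial.eval x) huw

lemma zero_lt_max_abv_eval (av : AbsoluteValue K ℝ) (φ : RatFunc K) (x : K) :
    0 < max (av (φ.num.eval x)) (av (φ.denom.eval x)) := by
  by_cases hx : φ.denom.eval x = 0
  · exact lt_max_of_lt_left (av.pos (φ.eval_num_ne_zero_of_eval_denom_eq_zero hx))
  · exact lt_max_of_lt_right (av.pos hx)

lemma resultant_num_denom_ne_zero (φ : RatFunc K) :
    resultant φ.num φ.denom (degRF φ) (degRF φ) ≠ 0 :=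
  resultant_ne_zero_of_natDegree_le φ.isCoprime_num_denom (natDegree_num_le_degRF φ)
    (natDegree_denom_le_degRF φ) ((max_choice _ _).imp Eq.symm Eq.symm)

end RatFunc

namespace IsNonarchimedean

variable {av : AbsoluteValue K ℝ}

lemma log_max_abv_eval_le (hv : IsNonarchimedean av) (φ : RatFunc K) (x : K) :
    Real.log (max (av (φ.num.eval x)) (av (φ.denom.eval x))) ≤
      Real.log (ratFuncAbs av φ) + degRF φ * Real.log (max (av x) 1) := by
  have hΦ := one_le_ratFuncAbs av φ
  rw [← Real.log_pow, ← Real.log_mul (by positivity) (by positivity)]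
  refine Real.log_le_log (φ.zero_lt_max_abv_eval av x) (max_le ?_ ?_)
  · exact hv.abv_eval_le (natDegree_num_le_degRF φ) (abv_coeff_num_le_ratFuncAbs av φ) x
  · exact hv.abv_eval_le (natDegree_denom_le_degRF φ) (abv_coeff_denom_le_ratFuncAbs av φ) x

lemma log_abv_resultant_add_le (hv : IsNonarchimedean av) (φ : RatFunc K)
    (hφ : 1 ≤ degRF φ) (x : K) :
    Real.log (av (resultant φ.num φ.denom (degRF φ) (degRF φ))) +
        degRF φ * Real.log (max (av x) 1) ≤
      (degRF φ + degRF φ) * Real.log (ratFuncAbs av φ) +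
        Real.log (max (av (φ.num.eval x)) (av (φ.denom.eval x))) := by
  have hR := av.pos φ.resultant_num_denom_ne_zero
  have hΦ := one_le_ratFuncAbs av φ
  have hE := φ.zero_lt_max_abv_eval av x
  have h := hv.abv_resultant_mul_le hφ (natDegree_num_le_degRF φ) (natDegree_denom_le_degRF φ)
    hΦ (abv_coeff_num_le_ratFuncAbs av φ) (abv_coeff_denom_le_ratFuncAbs av φ) x
  have := Real.log_le_log (by positivity) h
  rw [Real.log_mul hR.ne' (by positivity), Real.log_mul (by positivity) hE.ne', Real.log_pow,
    Real.log_pow] at this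
  exact_mod_cast this

end IsNonarchimedean

lemma Function.HasFiniteSupport.log_of_eventually {ι : Type*} {F : ι → ℝ}
    (h : ∀ᶠ i in cofinite, F i = 0 ∨ F i = 1) : HasFiniteSupport fun i => Real.log (F i) := by
  refine (Filter.eventually_cofinite.mp ?_).subset fun i hi => hi
  exact h.mono fun i hi => by rcases hi with hi | hi <;> simp [hi]

namespace PlaceData

variable (M : PlaceData K)

/-- `htPair a b` is the height `h([a : b])` of the point of `ℙ¹(K)` with homogeneous
coordinates `(a, b) ≠ (0, 0)`. -/
def htPair (a b : K) : ℝ :=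
  ∑ᶠ v, Real.log (max (M.absv v a) (M.absv v b))

lemma isNonarchimedean (v : M.Place) : IsNonarchimedean (M.absv v) := M.nonarch v

lemma eventually_absv_eq_zero_or_one (y : K) :
    ∀ᶠ v in cofinite, M.absv v y = 0 ∨ M.absv v y = 1 := by
  rcases eq_or_ne y 0 with rfl | hy
  · simp
  · exact (Filter.eventually_cofinite.mpr (M.finite_support y hy)).mono fun v hv => .inr hv

lemma eventually_absv_le_one (y : K) : ∀ᶠ v in cofinite, M.absv v y ≤ 1 :=
  (M.eventually_absv_eq_zero_or_one y).mono fun v hv => by rcases hv with hv | hv <;> simp [hv]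

lemma eventually_polyAbs_le_one (p : K[X]) : ∀ᶠ v in cofinite, polyAbs (M.absv v) p ≤ 1 :=
  ((Finset.range _).eventually_all.mpr fun i _ => M.eventually_absv_le_one (p.coeff i)).mono
    fun _ hv => Finset.sup'_le _ _ hv

lemma hasFiniteSupport_log_absv (y : K) : HasFiniteSupport fun v => Real.log (M.absv v y) :=
  .log_of_eventually ((M.eventually_absv_eq_zero_or_one y).mono fun _ hv => hv)

lemma hasFiniteSupport_log_max_absv (a b : K) :
    HasFiniteSupport fun v => Real.log (max (M.absv v a) (M.absv v b)) := by
  refine .log_of_eventually <| ((M.eventually_absv_eq_zero_or_one a).and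
    (M.eventually_absv_eq_zero_or_one b)).mono fun v ⟨ha, hb⟩ => ?_
  rcases ha with ha | ha <;> rcases hb with hb | hb <;> simp [ha, hb]

lemma hasFiniteSupport_log_ratFuncAbs (φ : RatFunc K) :
    HasFiniteSupport fun v => Real.log (ratFuncAbs (M.absv v) φ) := by
  refine .log_of_eventually <| ((M.eventually_polyAbs_le_one φ.num).and
    (M.eventually_polyAbs_le_one φ.denom)).mono fun v ⟨hn, hd⟩ => .inr ?_
  exact le_antisymm (max_le hn hd) (one_le_ratFuncAbs _ φ)

lemma finsum_le_finsum_of_log_absv_add_le {R : K} (hR : R ≠ 0) {a b : M.Place → ℝ}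
    (ha : HasFiniteSupport a) (hb : HasFiniteSupport b)
    (h : ∀ v, Real.log (M.absv v R) + a v ≤ b v) : ∑ᶠ v, a v ≤ ∑ᶠ v, b v := by
  have hR' := M.hasFiniteSupport_log_absv R
  calc ∑ᶠ v, a v = ∑ᶠ v, (Real.log (M.absv v R) + a v) := by
        rw [finsum_add_distrib hR' ha, M.product_formula R hR, zero_add]
    _ ≤ ∑ᶠ v, b v := finsum_le_finsum' (hR'.add ha) hb h

lemma htRF_eq (φ : RatFunc K) : M.htRF φ = ∑ᶠ v, Real.log (ratFuncAbs (M.absv v) φ) := rfl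

lemma htRF_nonneg (φ : RatFunc K) : 0 ≤ M.htRF φ :=
  finsum_nonneg fun _ => Real.log_nonneg (one_le_ratFuncAbs _ φ)

lemma ht_nonneg (x : K) : 0 ≤ M.ht x :=
  finsum_nonneg fun _ => Real.log_nonneg (le_max_right _ _)

lemma htP1_nonneg (P : Option K) : 0 ≤ M.htP1 P := by
  cases P
  · exact le_rfl
  · exact M.ht_nonneg _

lemma htPair_zero_right {a : K} (ha : a ≠ 0) : M.htPair a 0 = 0 := by
  simpa [htPair] using M.product_formula a ha

lemma ht_div_eq_htPair (a : K) {b : K} (hb : b ≠ 0) : M.ht (a / b) = M.htPair a b := by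
  have hlog : ∀ v, Real.log (max (M.absv v (a / b)) 1) =
      Real.log (max (M.absv v a) (M.absv v b)) - Real.log (M.absv v b) := fun v => by
    have hbv : 0 < M.absv v b := (M.absv v).pos hb
    rw [← Real.log_div (lt_of_lt_of_le hbv (le_max_right _ _)).ne' hbv.ne', ← max_div_div_right
      hbv.le, div_self hbv.ne', map_div₀]
  rw [ht, finsum_congr hlog, finsum_sub_distrib (M.hasFiniteSupport_log_max_absv a b)
    (M.hasFiniteSupport_log_absv b), M.product_formula b hb, sub_zero, htPair]

lemma htP1_evalP1_some (φ : RatFunc K) (x : K) :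
    M.htP1 (evalP1 φ (some x)) = M.htPair (φ.num.eval x) (φ.denom.eval x) := by
  by_cases hx : φ.denom.eval x = 0
  · rw [hx, M.htPair_zero_right (φ.eval_num_ne_zero_of_eval_denom_eq_zero hx)]
    simp [evalP1, hx, htP1]
  · simp [evalP1, hx, htP1, M.ht_div_eq_htPair _ hx]

lemma htP1_evalP1_none_le (φ : RatFunc K) : M.htP1 (evalP1 φ none) ≤ M.htRF φ := by
  by_cases hlt : φ.denom.natDegree < φ.num.natDegree
  · simpa [evalP1, hlt, htP1] using M.htRF_nonneg φ
  · simp only [evalP1, hlt, if_false, htP1, φ.monic_denom.leadingCoeff, div_one, ht]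
    refine finsum_le_finsum' (by simpa using M.hasFiniteSupport_log_max_absv _ 1)
      (M.hasFiniteSupport_log_ratFuncAbs φ) fun v => ?_
    exact Real.log_le_log (by positivity) (max_le (abv_coeff_num_le_ratFuncAbs _ φ _)
      (one_le_ratFuncAbs _ φ))

lemma htPair_eval_le (φ : RatFunc K) (x : K) :
    M.htPair (φ.num.eval x) (φ.denom.eval x) ≤ M.htRF φ + degRF φ * M.ht x := by
  have hΦ := M.hasFiniteSupport_log_ratFuncAbs φ
  have hx := M.hasFiniteSupport_log_max_absv x 1
  simp only [map_one] at hx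
  rw [htRF_eq, ht, mul_finsum, ← finsum_add_distrib hΦ (by fun_prop)]
  exact finsum_le_finsum' (M.hasFiniteSupport_log_max_absv _ _) (by fun_prop)
    fun v => (M.isNonarchimedean v).log_max_abv_eval_le φ x

lemma le_htPair_eval (φ : RatFunc K) (hφ : 1 ≤ degRF φ) (x : K) :
    degRF φ * M.ht x ≤
      (degRF φ + degRF φ) * M.htRF φ + M.htPair (φ.num.eval x) (φ.denom.eval x) := by
  have hΦ := M.hasFiniteSupport_log_ratFuncAbs φ
  have hx := M.hasFiniteSupport_log_max_absv x 1
  simp only [map_one] at hx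
  have hE := M.hasFiniteSupport_log_max_absv (φ.num.eval x) (φ.denom.eval x)
  rw [htRF_eq, ht, htPair, mul_finsum, mul_finsum, ← finsum_add_distrib (by fun_prop) hE]
  exact M.finsum_le_finsum_of_log_absv_add_le φ.resultant_num_denom_ne_zero (by fun_prop)
    (by fun_prop) fun v => (M.isNonarchimedean v).log_abv_resultant_add_le φ hφ x

lemma abs_htP1_evalP1_sub_le (φ : RatFunc K) (hφ : 1 ≤ degRF φ) (P : Option K) :
    |M.htP1 (evalP1 φ P) - degRF φ * M.htP1 P| ≤ 2 * degRF φ * M.htRF φ := by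
  have hd : (1 : ℝ) ≤ degRF φ := by exact_mod_cast hφ
  have hφ0 := M.htRF_nonneg φ
  have hle : M.htRF φ ≤ 2 * degRF φ * M.htRF φ := by nlinarith
  cases P with
  | none =>
    rw [show M.htP1 none = 0 from rfl, mul_zero, sub_zero, abs_of_nonneg (M.htP1_nonneg _)]
    exact (M.htP1_evalP1_none_le φ).trans hle
  | some x =>
    rw [M.htP1_evalP1_some, show M.htP1 (some x) = M.ht x from rfl, abs_le]
    have := M.htPair_eval_le φ x
    have := M.le_htPair_eval φ hφ x
    constructor <;> linarith

end PlaceData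

theorem abs_limUnder_div_pow_sub_le {α : Type*} (T : α → α) (h : α → ℝ) {d : ℝ} (hd : 1 < d)
    {C : ℝ} (hC : ∀ Q, |h (T Q) - d * h Q| ≤ C) (P : α) :
    |limUnder atTop (fun n : ℕ => h (T^[n] P) / d ^ n) - h P| ≤ C / (d - 1) := by
  set u : ℕ → ℝ := fun n => h (T^[n] P) / d ^ n
  have hd0 : 0 < d := zero_lt_one.trans hd
  have hr : 1 / d < 1 := (div_lt_one hd0).mpr hd
  have hstep : ∀ n, dist (u n) (u (n + 1)) ≤ C / d * (1 / d) ^ n := fun n => by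
    have hn : 0 < d ^ (n + 1) := by positivity
    have hu : u n - u (n + 1) = -(h (T (T^[n] P)) - d * h (T^[n] P)) / d ^ (n + 1) := by
      simp only [u, Function.iterate_succ_apply']
      field_simp
      ring
    rw [Real.dist_eq, hu, abs_div, abs_neg, abs_of_pos hn, div_le_iff₀ hn]
    calc |h (T (T^[n] P)) - d * h (T^[n] P)| ≤ C := hC _
      _ = C / d * (1 / d) ^ n * d ^ (n + 1) := by rw [one_div, inv_pow, pow_succ]; field_simp
  obtain ⟨L, hL⟩ := cauchySeq_tendsto_of_complete (cauchySeq_of_le_geometric _ _ hr hstep)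
  have hdist := dist_le_of_le_geometric_of_tendsto₀ _ _ hr hstep hL
  rw [hL.limUnder_eq, abs_sub_comm, ← Real.dist_eq]
  calc dist (h P) L = dist (u 0) L := by simp [u]
    _ ≤ C / d / (1 - 1 / d) := hdist
    _ = C / (d - 1) := by field_simp

/-- constants `c₃, c₄` depending only on `d` with
`|ĥ_φ(P) - h(P)| ≤ c₃·h(φ) + c₄`. -/
theorem stmt_4 (d : ℕ) (hd : 2 ≤ d) :
    ∃ c₃ c₄ : ℝ, ∀ (K : Type) (_ : Field K) (M : PlaceData K) (φ : RatFunc K),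
      degRF φ = d → ∀ P : Option K,
        |canHt M φ P - M.htP1 P| ≤ c₃ * M.htRF φ + c₄ := by
  refine ⟨4, 0, fun K _ M φ hφ P => ?_⟩
  have hd' : (2 : ℝ) ≤ d := by exact_mod_cast hd
  have hstep := M.abs_htP1_evalP1_sub_le φ (by omega)
  rw [hφ] at hstep
  calc |canHt M φ P - M.htP1 P| ≤ 2 * d * M.htRF φ / (d - 1) := by
        simpa [canHt, hφ] using abs_limUnder_div_pow_sub_le _ _ (by linarith) hstep P
    _ ≤ 4 * M.htRF φ + 0 := by
        rw [add_zero, div_le_iff₀ (by linarith)]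
        nlinarith [M.htRF_nonneg φ]

end
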